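/- arXiv:2508.16338 — 2 statements merged into one kernel-verified Lean document; each statement's English description precedes it below -/
import Mathlib

section
/- For every integer n ≥ 5, ι(K_n □ C_n) = n, where K_n is the complete graph on n vertices and C_n is the cycle on n vertices. -/
/-! The diagonal `{(i, i)}` dominates `K_n □ C_n`, hence isolates it. Conversely, call the copy of
`K_n` over a vertex `v` of `C_n` the column of `v`. If an isolating set `A` misses the column of
`v`, all but one vertex of that column are dominated from the neighbouring columns, each by its
own vertex of `A`; so if moreover `|A| < n`, every vertex of `A` lies in a column adjacent to `v`.
Some column `m` is missed by such an `A`; pick `p ∈ A`, whose column is adjacent to `m`. As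
`n ≥ 5`, some vertex `v` of `C_n` is adjacent neither to `m` nor to the column of `p`. Then `A`
misses the column of `v`, so the column of `p` is adjacent to `v`: a contradiction. -/

/-- The closed neighborhood `N[A]` of a set of vertices. -/
def closedNbhd {V : Type*} (G : SimpleGraph V) (A : Set V) : Set V :=
  {v | v ∈ A ∨ ∃ a ∈ A, G.Adj a v}

/-- A set of vertices is independent if it contains no edge. -/
def IndepSet {V : Type*} (G : SimpleGraph V) (S : Set V) : Prop :=
  ∀ u ∈ S, ∀ v ∈ S, ¬ G.Adj u v

/-- `A` is isolating if the vertices outside `N[A]` form an independent set. -/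
def IsIsolating {V : Type*} (G : SimpleGraph V) (A : Set V) : Prop :=
  IndepSet G (closedNbhd G A)ᶜ

/-- The isolation number `ι(G)`. -/
noncomputable def isolationNum {V : Type*} (G : SimpleGraph V) : ℕ :=
  sInf {n | ∃ A : Set V, IsIsolating G A ∧ A.ncard = n}

/-- `D` is a dominating set if `N[D] = V(G)`. -/
def IsDominating {V : Type*} (G : SimpleGraph V) (D : Set V) : Prop :=
  closedNbhd G D = Set.univ

/-- The domination number `γ(G)`. -/
noncomputable def dominationNum {V : Type*} (G : SimpleGraph V) : ℕ :=
  sInf {n | ∃ D : Set V, IsDominating G D ∧ D.ncard = n}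

open SimpleGraph

section Isolation

variable {V : Type*} {G : SimpleGraph V}

lemma IsDominating.isIsolating {D : Set V} (hD : IsDominating G D) : IsIsolating G D :=
  fun u hu => absurd (hD ▸ Set.mem_univ u) hu

lemma isolationNum_le_ncard {A : Set V} (hA : IsIsolating G A) : isolationNum G ≤ A.ncard :=
  Nat.sInf_le ⟨A, hA, rfl⟩

lemma le_isolationNum {k : ℕ} (h : ∀ A, IsIsolating G A → k ≤ A.ncard) : k ≤ isolationNum G := by
  obtain ⟨A, hA, hmin⟩ := Nat.sInf_mem (s := {n | ∃ A : Set V, IsIsolating G A ∧ A.ncard = n})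
    ⟨_, Set.univ, fun u hu => by simp [closedNbhd] at hu, rfl⟩
  exact (h A hA).trans_eq hmin

end Isolation

section CompleteBoxProd

variable {α β : Type*}

lemma isDominating_top_boxProd_diagonal (H : SimpleGraph α) :
    IsDominating ((⊤ : SimpleGraph α).boxProd H) (Set.diagonal α) := by
  refine Set.eq_univ_of_forall fun ⟨i, j⟩ => ?_
  by_cases hij : i = j
  · exact Or.inl hij
  · exact Or.inr ⟨(j, j), rfl, boxProd_adj.mpr (Or.inl ⟨Ne.symm hij, rfl⟩)⟩

variable [Finite α] [Finite β] {H : SimpleGraph β} {A : Set (α × β)}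

lemma IsIsolating.card_le_ncard_adj_add_one (hA : IsIsolating ((⊤ : SimpleGraph α).boxProd H) A)
    {v : β} (hv : ∀ p ∈ A, p.2 ≠ v) :
    Nat.card α ≤ {p ∈ A | H.Adj p.2 v}.ncard + 1 := by
  set S := {i : α | (i, v) ∉ closedNbhd ((⊤ : SimpleGraph α).boxProd H) A}
  have hS : S.Subsingleton := fun i hi j hj => by
    by_contra hij
    exact hA (i, v) hi (j, v) hj (boxProd_adj.mpr (Or.inl ⟨hij, rfl⟩))
  have hcover : Set.univ ⊆ Prod.fst '' {p ∈ A | H.Adj p.2 v} ∪ S := by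
    rintro i -
    by_cases hi : i ∈ S
    · exact Or.inr hi
    · rcases not_not.mp hi with hiA | ⟨p, hpA, hp⟩
      · exact absurd rfl (hv _ hiA)
      · rcases boxProd_adj.mp hp with ⟨-, hpv⟩ | ⟨hpv, hpi⟩
        · exact absurd hpv (hv p hpA)
        · exact Or.inl ⟨p, ⟨hpA, hpv⟩, hpi⟩
  calc Nat.card α = (Set.univ : Set α).ncard := (Set.ncard_univ α).symm
    _ ≤ (Prod.fst '' {p ∈ A | H.Adj p.2 v} ∪ S).ncard := Set.ncard_le_ncard hcover
    _ ≤ (Prod.fst '' {p ∈ A | H.Adj p.2 v}).ncard + S.ncard := Set.ncard_union_le _ _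
    _ ≤ {p ∈ A | H.Adj p.2 v}.ncard + 1 :=
      add_le_add (Set.ncard_image_le) (Set.ncard_le_one_iff_subsingleton.mpr hS)

lemma IsIsolating.adj_of_ncard_lt (hA : IsIsolating ((⊤ : SimpleGraph α).boxProd H) A)
    (hcard : A.ncard < Nat.card α) {v : β} (hv : ∀ p ∈ A, p.2 ≠ v) :
    ∀ p ∈ A, H.Adj p.2 v := by
  have hsub : {p ∈ A | H.Adj p.2 v} ⊆ A := Set.sep_subset _ _
  have := hA.card_le_ncard_adj_add_one hv
  rw [← Set.eq_of_subset_of_ncard_le hsub (by omega)]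
  exact fun p hp => hp.2

lemma exists_forall_snd_ne_of_ncard_lt (hA : A.ncard < Nat.card β) : ∃ v : β, ∀ p ∈ A, p.2 ≠ v := by
  by_contra! h
  have : Nat.card β ≤ A.ncard := calc
    Nat.card β = (Set.univ : Set β).ncard := (Set.ncard_univ β).symm
    _ ≤ (Prod.snd '' A).ncard := Set.ncard_le_ncard fun v _ => by
      obtain ⟨p, hp, rfl⟩ := h v
      exact ⟨p, hp, rfl⟩
    _ ≤ A.ncard := Set.ncard_image_le
  omega

end CompleteBoxProd

section Cycle

open Fin.CommRing

lemma cycleGraph_exists_not_adj_of_adj {n : ℕ} (hn : 5 ≤ n) {a b : Fin n}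
    (hab : (cycleGraph n).Adj a b) : ∃ v, ¬(cycleGraph n).Adj a v ∧ ¬(cycleGraph n).Adj b v := by
  obtain ⟨k, rfl⟩ : ∃ k, n = k + 5 := ⟨n - 5, by omega⟩
  wlog hb : b = a + 1 generalizing a b
  · have hba : a = b + 1 := by
      rcases cycleGraph_adj.mp hab with h | h
      · exact (sub_eq_iff_eq_add.mp h).trans (add_comm _ _)
      · exact absurd ((sub_eq_iff_eq_add.mp h).trans (add_comm _ _)) hb
    exact (this hab.symm hba).imp fun _ => And.symm
  have hne : ∀ c : ℕ, 0 < c → c < k + 5 → (c : Fin (k + 5)) ≠ 0 := fun c h0 hc =>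
    Fin.natCast_eq_zero.not.mpr (Nat.not_dvd_of_pos_of_lt h0 hc)
  subst hb
  refine ⟨a + 3, ?_, ?_⟩ <;> rintro (h | h)
  · exact hne 4 (by omega) (by omega) (by linear_combination -h)
  · exact hne 2 (by omega) (by omega) (by linear_combination h)
  · exact hne 3 (by omega) (by omega) (by linear_combination -h)
  · exact hne 1 (by omega) (by omega) (by linear_combination h)

end Cycle

lemma IsIsolating.le_ncard_top_boxProd_cycleGraph {n : ℕ} (hn : 5 ≤ n) {A : Set (Fin n × Fin n)}
    (hA : IsIsolating ((⊤ : SimpleGraph (Fin n)).boxProd (cycleGraph n)) A) : n ≤ A.ncard := by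
  by_contra! hlt
  replace hlt : A.ncard < Nat.card (Fin n) := by rwa [Nat.card_fin]
  obtain ⟨m, hm⟩ := exists_forall_snd_ne_of_ncard_lt hlt
  have hadj_m := hA.adj_of_ncard_lt hlt hm
  obtain ⟨p, hpA, -⟩ : {p ∈ A | (cycleGraph n).Adj p.2 m}.Nonempty :=
    Set.nonempty_of_ncard_ne_zero (by linarith [hA.card_le_ncard_adj_add_one hm, Nat.card_fin n])
  obtain ⟨v, hmv, hpv⟩ := cycleGraph_exists_not_adj_of_adj hn (hadj_m p hpA).symm
  have hv : ∀ q ∈ A, q.2 ≠ v := fun q hq hqv => hmv (hqv ▸ (hadj_m q hq).symm)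
  exact hpv (hA.adj_of_ncard_lt hlt hv p hpA)

/-- For every `n ≥ 5`, `ι(K_n □ C_n) = n`. -/
theorem isolation_completeGraph_boxProd_cycleGraph (n : ℕ) (hn : 5 ≤ n) :
    isolationNum ((⊤ : SimpleGraph (Fin n)).boxProd (SimpleGraph.cycleGraph n)) = n := by
  refine le_antisymm ?_ (le_isolationNum fun A hA => hA.le_ncard_top_boxProd_cycleGraph hn)
  calc isolationNum _ ≤ (Set.diagonal (Fin n)).ncard :=
        isolationNum_le_ncard (isDominating_top_boxProd_diagonal _).isIsolating
    _ = n := by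
      rw [← Set.range_diag, Set.ncard_range_of_injective Function.diag_injective, Nat.card_fin]
end

section
/- If G is a finite simple graph of order n(G) and t ≥ 2 is an integer, then ι(S_G^t) ≥ ι(S_G² | Ex(S_G²))·n(G)^{t−2}, where ι(S_G² | Ex(S_G²)) is the minimum cardinality of a set A ⊆ V(S_G²) such that every edge of S_G² has an endpoint in N[A] ∪ Ex(S_G²), Ex(S_G²) being the set of extreme vertices of S_G². -/
/-- The generalized Sierpiński graph `S_G^t` on words of length `t` over `V(G)`. -/
def sierpinskiGraph {V : Type*} (G : SimpleGraph V) (t : ℕ) : SimpleGraph (Fin t → V) where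
  Adj u v := ∃ i : Fin t, (∀ j, j < i → u j = v j) ∧ u i ≠ v i ∧ G.Adj (u i) (v i) ∧
      ∀ j, i < j → u j = v i ∧ v j = u i
  symm := by
    constructor
    rintro u v ⟨i, h1, h2, h3, h4⟩
    exact ⟨i, fun j hj => (h1 j hj).symm, h2.symm, h3.symm,
      fun j hj => ⟨(h4 j hj).2, (h4 j hj).1⟩⟩
  loopless := by
    constructor
    rintro u ⟨i, -, h2, -, -⟩
    exact h2 rfl

/-- The extreme vertices of `S_G^t`: the constant words. -/
def extremeVertices (V : Type*) (t : ℕ) : Set (Fin t → V) :=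
  {w | ∃ x : V, w = fun _ => x}
/-- `ι(G|X)`: the minimum size of a set `A` such that the vertices outside
`N[A] ∪ X` form an independent set (vertices of `X` counting as already dominated). -/
noncomputable def isolationNumRel {V : Type*} (G : SimpleGraph V) (X : Set V) : ℕ :=
  sInf {n | ∃ A : Set V, IndepSet G (closedNbhd G A ∪ X)ᶜ ∧ A.ncard = n}

/-! Write a word of length `m + 2` as `Fin.append w u` with a prefix `w` of length `m`.
The words with prefix `w` span a copy of `S_G²` inside `S_G^{m+2}`, and only the extreme
vertices of that copy have neighbours outside it. So the trace `{u | Fin.append w u ∈ A}` of an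
isolating set `A` isolates `S_G²` relative to its extreme vertices and has at least
`ι(S_G² | Ex(S_G²))` elements; summing over the `n(G)^m` prefixes gives the bound. -/

theorem Fin.castAdd_lt_natAdd {m n : ℕ} (i : Fin m) (j : Fin n) :
    Fin.castAdd n i < Fin.natAdd m j :=
  Fin.lt_def.2 (Nat.lt_add_right _ i.isLt)

section SierpinskiIsolation

variable {V : Type*} (G : SimpleGraph V) {m n : ℕ}

theorem sierpinskiGraph_adj_append_iff (w : Fin m → V) (a b : Fin n → V) :
    (sierpinskiGraph G (m + n)).Adj (Fin.append w a) (Fin.append w b) ↔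
      (sierpinskiGraph G n).Adj a b := by
  constructor
  · rintro ⟨i, hlt, hne, hadj, hgt⟩
    induction i using Fin.addCases with
    | left k => simp at hne
    | right k =>
      simp only [Fin.append_right] at hne hadj hgt
      refine ⟨k, fun j hj => ?_, hne, hadj, fun j hj => ?_⟩
      · simpa using hlt (Fin.natAdd m j) ((Fin.natAdd_lt_natAdd_iff m).2 hj)
      · simpa using hgt (Fin.natAdd m j) ((Fin.natAdd_lt_natAdd_iff m).2 hj)
  · rintro ⟨i, hlt, hne, hadj, hgt⟩
    refine ⟨Fin.natAdd m i, fun j hj => ?_, by simpa using hne, by simpa using hadj,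
      fun j hj => ?_⟩
    · induction j using Fin.addCases with
      | left k => simp
      | right k => simpa using hlt k ((Fin.natAdd_lt_natAdd_iff m).1 hj)
    · induction j using Fin.addCases with
      | left k => exact absurd hj (Fin.castAdd_lt_natAdd k i).asymm
      | right k => simpa using hgt k ((Fin.natAdd_lt_natAdd_iff m).1 hj)

theorem sierpinskiGraph_adj_append_left {w : Fin m → V} {a : Fin n → V} {x : Fin (m + n) → V}
    (h : (sierpinskiGraph G (m + n)).Adj (Fin.append w a) x) :
    a ∈ extremeVertices V n ∨ ∃ b, x = Fin.append w b := by
  by_cases hprefix : ∀ k, x (Fin.castAdd n k) = w k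
  · right
    refine ⟨fun k => x (Fin.natAdd m k), funext fun i => ?_⟩
    induction i using Fin.addCases <;> simp [hprefix]
  · left
    obtain ⟨k, hk⟩ := not_forall.mp hprefix
    obtain ⟨i, hlt, -, -, hgt⟩ := h
    have hik : i ≤ Fin.castAdd n k := by
      by_contra! hki
      exact hk (by simpa using (hlt _ hki).symm)
    refine ⟨x i, funext fun j => ?_⟩
    simpa using (hgt _ (hik.trans_lt (Fin.castAdd_lt_natAdd k j))).1

theorem mem_closedNbhd_of_append_mem_closedNbhd {A : Set (Fin (m + n) → V)} {w : Fin m → V}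
    {u : Fin n → V} (hu : Fin.append w u ∈ closedNbhd (sierpinskiGraph G (m + n)) A) :
    u ∈ closedNbhd (sierpinskiGraph G n) (Fin.append w ⁻¹' A) ∪ extremeVertices V n := by
  rcases hu with hmem | ⟨x, hx, hadj⟩
  · exact Or.inl (Or.inl hmem)
  · rcases sierpinskiGraph_adj_append_left G hadj.symm with hext | ⟨b, rfl⟩
    · exact Or.inr hext
    · exact Or.inl (Or.inr ⟨b, hx, (sierpinskiGraph_adj_append_iff G w b u).1 hadj⟩)

theorem IsIsolating.indepSet_preimage_append {A : Set (Fin (m + n) → V)}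
    (hA : IsIsolating (sierpinskiGraph G (m + n)) A) (w : Fin m → V) :
    IndepSet (sierpinskiGraph G n)
      (closedNbhd (sierpinskiGraph G n) (Fin.append w ⁻¹' A) ∪ extremeVertices V n)ᶜ :=
  fun a ha b hb hab =>
    hA _ (mt (mem_closedNbhd_of_append_mem_closedNbhd G) ha)
      _ (mt (mem_closedNbhd_of_append_mem_closedNbhd G) hb)
      ((sierpinskiGraph_adj_append_iff G w a b).2 hab)

theorem IsIsolating.isolationNumRel_le_ncard_preimage_append {A : Set (Fin (m + n) → V)}
    (hA : IsIsolating (sierpinskiGraph G (m + n)) A) (w : Fin m → V) :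
    isolationNumRel (sierpinskiGraph G n) (extremeVertices V n) ≤ (Fin.append w ⁻¹' A).ncard :=
  Nat.sInf_le ⟨_, hA.indepSet_preimage_append G w, rfl⟩

theorem ncard_eq_sum_ncard_preimage_append [Fintype V] (A : Set (Fin (m + n) → V)) :
    A.ncard = ∑ w : Fin m → V, (Fin.append w ⁻¹' A).ncard := by
  have e : A ≃ Σ w : Fin m → V, (Fin.append w ⁻¹' A) :=
    ((Fin.appendEquiv m n).subtypeEquiv (q := (· ∈ A)) fun _ => Iff.rfl).symm.trans
      (Equiv.subtypeProdEquivSigmaSubtype fun w u => Fin.append w u ∈ A)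
  rw [← Nat.card_coe_set_eq, Nat.card_congr e, Nat.card_sigma]
  rfl

theorem IsIsolating.isolationNumRel_mul_card_pow_le_ncard [Fintype V]
    {A : Set (Fin (m + n) → V)} (hA : IsIsolating (sierpinskiGraph G (m + n)) A) :
    isolationNumRel (sierpinskiGraph G n) (extremeVertices V n) * Fintype.card V ^ m ≤
      A.ncard :=
  calc isolationNumRel (sierpinskiGraph G n) (extremeVertices V n) * Fintype.card V ^ m
      = ∑ _w : Fin m → V, isolationNumRel (sierpinskiGraph G n) (extremeVertices V n) := by
        simp [mul_comm]
    _ ≤ ∑ w : Fin m → V, (Fin.append w ⁻¹' A).ncard :=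
        Finset.sum_le_sum fun w _ => hA.isolationNumRel_le_ncard_preimage_append G w
    _ = A.ncard := (ncard_eq_sum_ncard_preimage_append A).symm

end SierpinskiIsolation

theorem isIsolating_univ {V : Type*} (G : SimpleGraph V) : IsIsolating G Set.univ :=
  fun u hu => absurd (Or.inl (Set.mem_univ u)) hu

theorem exists_isIsolating_ncard_eq_isolationNum {V : Type*} (G : SimpleGraph V) :
    ∃ A, IsIsolating G A ∧ A.ncard = isolationNum G :=
  Nat.sInf_mem (s := {n | ∃ A, IsIsolating G A ∧ A.ncard = n}) ⟨_, _, isIsolating_univ G, rfl⟩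

/-- For `t ≥ 2`, `ι(S_G^t) ≥ ι(S_G² | Ex(S_G²)) · n(G)^{t−2}`. -/
theorem isolation_sierpinski_ge
    {V : Type*} [Fintype V] (G : SimpleGraph V) (t : ℕ) (ht : 2 ≤ t) :
    isolationNum (sierpinskiGraph G t) ≥
      isolationNumRel (sierpinskiGraph G 2) (extremeVertices V 2) *
        Fintype.card V ^ (t - 2) := by
  obtain ⟨m, rfl⟩ := Nat.exists_eq_add_of_le' ht
  obtain ⟨A, hA, hAcard⟩ := exists_isIsolating_ncard_eq_isolationNum (sierpinskiGraph G (m + 2))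
  rw [Nat.add_sub_cancel, ← hAcard]
  exact hA.isolationNumRel_mul_card_pow_le_ncard G
end
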